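/- arXiv:1904.04730 — 5 statements merged into one kernel-verified Lean document; each statement's English description precedes it below -/
import Mathlib

section
/- Let C be a triangulated category and X a cluster tilting subcategory of C. Then the quotient category C/X is an abelian category. -/
open CategoryTheory CategoryTheory.Limits CategoryTheory.Pretriangulated

universe v u

namespace ClusterNote

/-- A Serre functor on a `k`-linear category `C`: a `k`-linear autoequivalence `S`
with bifunctorial isomorphisms `Hom(A, B) ≅ D Hom(B, S A)`. -/
structure SerreFunctor (k : Type*) [Field k] (C : Type u) [Category.{v} C]
    [Preadditive C] [Linear k C] where
  S : C ⥤ C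
  additive : S.Additive
  linear : S.Linear k
  isEquivalence : S.IsEquivalence
  serre : ∀ A B : C, (A ⟶ B) ≃ₗ[k] Module.Dual k (B ⟶ S.obj A)
  serre_natural_left : ∀ ⦃A' A B : C⦄ (u : A' ⟶ A) (f : A ⟶ B) (φ : B ⟶ S.obj A'),
    serre A' B (u ≫ f) φ = serre A B f (φ ≫ S.map u)
  serre_natural_right : ∀ ⦃A B B' : C⦄ (f : A ⟶ B) (v : B ⟶ B') (ψ : B' ⟶ S.obj A),
    serre A B' (f ≫ v) ψ = serre A B f (v ≫ ψ)

variable {C : Type u} [Category.{v} C]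

/-- A morphism factors through an object of the subcategory `X`. -/
def FactorsThru (X : Set C) {A B : C} (f : A ⟶ B) : Prop :=
  ∃ Z ∈ X, ∃ (g : A ⟶ Z) (h : Z ⟶ B), g ≫ h = f

/-- `X` contains all zero objects. -/
def ContainsZero (X : Set C) : Prop := ∀ Z : C, IsZero Z → Z ∈ X

/-- `X` is closed under retracts (direct summands); this also entails closure
under isomorphisms. -/
def ClosedUnderRetracts (X : Set C) : Prop :=
  ∀ ⦃A P : C⦄ (i : A ⟶ P) (p : P ⟶ A), i ≫ p = 𝟙 A → P ∈ X → A ∈ X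

section Preadd
variable [Preadditive C]

/-- `X` is closed under finite direct sums (stated via binary biproduct data). -/
def ClosedUnderBiprod (X : Set C) : Prop :=
  ∀ ⦃A B P : C⦄ (iA : A ⟶ P) (iB : B ⟶ P) (pA : P ⟶ A) (pB : P ⟶ B),
    iA ≫ pA = 𝟙 A → iB ≫ pB = 𝟙 B → iA ≫ pB = 0 → iB ≫ pA = 0 →
    pA ≫ iA + pB ≫ iB = 𝟙 P → A ∈ X → B ∈ X → P ∈ X

/-- `X` is a full additive subcategory, closed under isomorphisms and direct summands. -/
def GoodSub (X : Set C) : Prop :=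
  ContainsZero X ∧ ClosedUnderRetracts X ∧ ClosedUnderBiprod X

/-- The ideal relation on morphisms: `f ~ g` iff `f - g` factors through an object of `X`. -/
def xRel (X : Set C) : HomRel C := fun {A B : C} (f g : A ⟶ B) => FactorsThru X (f - g)

end Preadd

/-- `g : X₀ ⟶ M` is a right `X`-approximation of `M`. -/
def IsRightApprox (X : Set C) {X₀ M : C} (g : X₀ ⟶ M) : Prop :=
  X₀ ∈ X ∧ ∀ Z ∈ X, ∀ f : Z ⟶ M, ∃ h : Z ⟶ X₀, h ≫ g = f

/-- `X` is contravariantly finite in `C`. -/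
def ContravariantlyFinite (X : Set C) : Prop :=
  ∀ M : C, ∃ (X₀ : C) (g : X₀ ⟶ M), IsRightApprox X g

/-- `g : M ⟶ X₀` is a left `X`-approximation of `M`. -/
def IsLeftApprox (X : Set C) {M X₀ : C} (g : M ⟶ X₀) : Prop :=
  X₀ ∈ X ∧ ∀ Z ∈ X, ∀ f : M ⟶ Z, ∃ h : X₀ ⟶ Z, g ≫ h = f

/-- `X` is covariantly finite in `C`. -/
def CovariantlyFinite (X : Set C) : Prop :=
  ∀ M : C, ∃ (X₀ : C) (g : M ⟶ X₀), IsLeftApprox X g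

section Shifted
variable [Preadditive C] [HasShift C ℤ]

/-- `X` is rigid: `Hom(X, X'[1]) = 0`. -/
def Rigid (X : Set C) : Prop :=
  ∀ A ∈ X, ∀ B ∈ X, ∀ f : A ⟶ B⟦(1 : ℤ)⟧, f = 0

/-- `X` is a cluster tilting subcategory. -/
def ClusterTilting (X : Set C) : Prop :=
  ContravariantlyFinite X ∧ CovariantlyFinite X ∧
    (∀ M : C, M ∈ X ↔ ∀ Z ∈ X, ∀ f : Z ⟶ M⟦(1 : ℤ)⟧, f = 0) ∧
    (∀ M : C, M ∈ X ↔ ∀ Z ∈ X, ∀ f : M ⟶ Z⟦(1 : ℤ)⟧, f = 0)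

end Shifted

section Preadd2
variable [Preadditive C]

/-- An object is indecomposable: it is nonzero and admits no nontrivial idempotent
endomorphism. -/
def Indecomp (A : C) : Prop :=
  ¬ IsZero A ∧ ∀ e : A ⟶ A, e ≫ e = e → e = 0 ∨ e = 𝟙 A

end Preadd2

section Tri
variable [HasZeroObject C] [Preadditive C] [HasShift C ℤ]
  [∀ n : ℤ, (shiftFunctor C n).Additive] [Pretriangulated C]

/-- `A ⟶ B ⟶ N ⟶ A[1]` is an Auslander-Reiten triangle. -/
def IsARTriangle {A B N : C} (u : A ⟶ B) (v : B ⟶ N) (w : N ⟶ A⟦(1 : ℤ)⟧) : Prop :=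
  (Triangle.mk u v w ∈ distTriang C) ∧ Indecomp A ∧ Indecomp N ∧ w ≠ 0 ∧
    ∀ ⦃Y : C⦄ (f : Y ⟶ N), ¬ IsSplitEpi f → ∃ f' : Y ⟶ B, f' ≫ v = f

end Tri


section SerreShift

variable {k : Type*} [Field k] [Preadditive C] [Linear k C] [HasShift C ℤ]

/-- `S(X) = X[2]`. -/
def SerreShiftTwo (T : SerreFunctor k C) (X : Set C) : Prop :=
  (∀ A ∈ X, ∃ A' ∈ X, Nonempty (T.S.obj A ≅ A'⟦(2 : ℤ)⟧)) ∧
  (∀ A ∈ X, ∃ A'' ∈ X, Nonempty (A⟦(2 : ℤ)⟧ ≅ T.S.obj A''))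

end SerreShift


section KZProof

open ZeroObject
set_option linter.unusedSectionVars false

variable [HasZeroObject C] [Preadditive C] [HasShift C ℤ]
  [∀ n : ℤ, (shiftFunctor C n).Additive] [Pretriangulated C]
variable {X : Set C}

lemma fac_comp_left {A B D : C} (e : D ⟶ A) {f : A ⟶ B} (hf : FactorsThru X f) :
    FactorsThru X (e ≫ f) := by
  obtain ⟨Z, hZ, g, h, rfl⟩ := hf
  exact ⟨Z, hZ, e ≫ g, h, by simp⟩

lemma fac_comp_right {A B D : C} {f : A ⟶ B} (e : B ⟶ D) (hf : FactorsThru X f) :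
    FactorsThru X (f ≫ e) := by
  obtain ⟨Z, hZ, g, h, rfl⟩ := hf
  exact ⟨Z, hZ, g, h ≫ e, by simp⟩

lemma fac_of_src_mem {A B : C} (hA : A ∈ X) (f : A ⟶ B) : FactorsThru X f :=
  ⟨A, hA, 𝟙 A, f, by simp⟩

lemma fac_of_tgt_mem {A B : C} (hB : B ∈ X) (f : A ⟶ B) : FactorsThru X f :=
  ⟨B, hB, f, 𝟙 B, by simp⟩

lemma fac_zero (hX : GoodSub X) (A B : C) : FactorsThru X (0 : A ⟶ B) :=
  ⟨0, hX.1 _ (Limits.isZero_zero C), 0, 0, by simp⟩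

lemma fac_neg {A B : C} {f : A ⟶ B} (hf : FactorsThru X f) : FactorsThru X (-f) := by
  obtain ⟨Z, hZ, g, h, rfl⟩ := hf
  exact ⟨Z, hZ, g, -h, by simp⟩

lemma biprod_mem (hX : GoodSub X) {A B : C} (hA : A ∈ X) (hB : B ∈ X) :
    (A ⊞ B : C) ∈ X :=
  hX.2.2 biprod.inl biprod.inr biprod.fst biprod.snd biprod.inl_fst biprod.inr_snd
    biprod.inl_snd biprod.inr_fst (biprod.total) hA hB

lemma fac_add (hX : GoodSub X) {A B : C} {f g : A ⟶ B}
    (hf : FactorsThru X f) (hg : FactorsThru X g) : FactorsThru X (f + g) := by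
  obtain ⟨Z₁, hZ₁, a₁, b₁, rfl⟩ := hf
  obtain ⟨Z₂, hZ₂, a₂, b₂, rfl⟩ := hg
  exact ⟨Z₁ ⊞ Z₂, biprod_mem hX hZ₁ hZ₂, biprod.lift a₁ a₂, biprod.desc b₁ b₂, by simp⟩

lemma fac_sub (hX : GoodSub X) {A B : C} {f g : A ⟶ B}
    (hf : FactorsThru X f) (hg : FactorsThru X g) : FactorsThru X (f - g) := by
  rw [sub_eq_add_neg]; exact fac_add hX hf (fac_neg hg)

lemma congruence_xrel (hX : GoodSub X) : Congruence (xRel X) where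
  equivalence :=
    { refl := fun f => by
        have : FactorsThru X (f - f) := by rw [sub_self]; exact fac_zero hX _ _
        exact this
      symm := fun {f g} h => by
        have := fac_neg (X := X) h
        rw [neg_sub] at this
        exact this
      trans := fun {f g h} h₁ h₂ => by
        have := fac_add hX h₁ h₂
        rw [sub_add_sub_cancel] at this
        exact this }
  comp_left := by
    intro A B D e g g' h
    have := fac_comp_left (X := X) e h
    rw [Preadditive.comp_sub] at this
    exact this
  comp_right := by
    intro A B D f f' e h
    have := fac_comp_right (X := X) e h
    rw [Preadditive.sub_comp] at this
    exact this

lemma rigid_of_ct (hct : ClusterTilting X) {A B : C} (hA : A ∈ X) (hB : B ∈ X)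
    (f : A ⟶ B⟦(1 : ℤ)⟧) : f = 0 :=
  ((hct.2.2.1 B).mp hB) A hA f

lemma negshift_vanish (hct : ClusterTilting X) {A B : C} (hA : A ∈ X) (hB : B ∈ X)
    (f : A⟦(-1 : ℤ)⟧ ⟶ B) : f = 0 := by
  apply (shiftFunctor C (1 : ℤ)).map_injective
  rw [Functor.map_zero]
  have h0 : (shiftFunctorCompIsoId C (-1 : ℤ) (1 : ℤ) (by norm_num)).inv.app A ≫
      (shiftFunctor C (1 : ℤ)).map f = 0 := rigid_of_ct hct hA hB _
  calc (shiftFunctor C (1 : ℤ)).map f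
      = (shiftFunctorCompIsoId C (-1 : ℤ) (1 : ℤ) (by norm_num)).hom.app A ≫
        ((shiftFunctorCompIsoId C (-1 : ℤ) (1 : ℤ) (by norm_num)).inv.app A ≫
          (shiftFunctor C (1 : ℤ)).map f) := by simp
    _ = 0 := by rw [h0, comp_zero]

/-- Approximation triangle on the right: `X₁ ⟶ X₀ ⟶ T ⟶ X₁⟦1⟧`. -/
lemma right_tri (hX : GoodSub X) (hct : ClusterTilting X) (T : C) :
    ∃ (X₀ : C) (_ : X₀ ∈ X) (g : X₀ ⟶ T) (_ : IsRightApprox X g) (X₁ : C) (_ : X₁ ∈ X)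
      (h : T ⟶ X₁⟦(1 : ℤ)⟧) (w : X₁⟦(1 : ℤ)⟧ ⟶ X₀⟦(1 : ℤ)⟧),
      Triangle.mk g h w ∈ distTriang C := by
  obtain ⟨X₀, g, hg⟩ := hct.1 T
  obtain ⟨Z, h', w', htri⟩ := Pretriangulated.distinguished_cocone_triangle g
  -- every map from an object of `X` to `Z` vanishes
  have hZvan : ∀ W ∈ X, ∀ t : W ⟶ Z, t = 0 := by
    intro W hW t
    have h1 : t ≫ w' = 0 := rigid_of_ct hct hW hg.1 _
    obtain ⟨u, hu⟩ := Triangle.coyoneda_exact₃ _ htri t h1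
    obtain ⟨u', hu'⟩ := hg.2 W hW u
    have h12 : g ≫ h' = 0 := comp_distTriang_mor_zero₁₂ _ htri
    rw [hu, ← hu']
    change (u' ≫ g) ≫ h' = 0
    rw [Category.assoc]
    rw [h12, comp_zero]
  -- `Z⟦-1⟧` belongs to `X`
  have hX₁ : (Z⟦(-1 : ℤ)⟧ : C) ∈ X := by
    rw [hct.2.2.1]
    intro W hW f
    have : f ≫ (shiftFunctorCompIsoId C (-1 : ℤ) (1 : ℤ) (by norm_num)).hom.app Z = 0 :=
      hZvan W hW _
    calc f = (f ≫ (shiftFunctorCompIsoId C (-1 : ℤ) (1 : ℤ) (by norm_num)).hom.app Z) ≫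
          (shiftFunctorCompIsoId C (-1 : ℤ) (1 : ℤ) (by norm_num)).inv.app Z := by simp
      _ = 0 := by rw [this, zero_comp]
  -- replace `Z` by `Z⟦-1⟧⟦1⟧`
  set e : (Z⟦(-1 : ℤ)⟧)⟦(1 : ℤ)⟧ ≅ Z :=
    (shiftFunctorCompIsoId C (-1 : ℤ) (1 : ℤ) (by norm_num)).app Z with he
  refine ⟨X₀, hg.1, g, hg, Z⟦(-1 : ℤ)⟧, hX₁, h' ≫ e.inv, e.hom ≫ w', ?_⟩
  refine Pretriangulated.isomorphic_distinguished _ htri _ ?_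
  exact Triangle.isoMk _ _ (Iso.refl _) (Iso.refl _) e
    (by change g ≫ 𝟙 T = 𝟙 X₀ ≫ g; simp) (by change (h' ≫ e.inv) ≫ e.hom = 𝟙 T ≫ h'; simp)
    (by change (e.hom ≫ w') ≫ (shiftFunctor C (1 : ℤ)).map (𝟙 X₀) = e.hom ≫ w'; simp)

/-- Approximation triangle on the left: `T ⟶ X⁰ ⟶ X¹ ⟶ T⟦1⟧`. -/
lemma left_tri (hX : GoodSub X) (hct : ClusterTilting X) (T : C) :
    ∃ (X₀ : C) (_ : X₀ ∈ X) (l : T ⟶ X₀) (_ : IsLeftApprox X l) (X₁ : C) (_ : X₁ ∈ X)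
      (z : X₀ ⟶ X₁) (c : X₁ ⟶ T⟦(1 : ℤ)⟧), Triangle.mk l z c ∈ distTriang C := by
  obtain ⟨X₀, l, hl⟩ := hct.2.1 T
  obtain ⟨Z, z, c, htri⟩ := Pretriangulated.distinguished_cocone_triangle l
  have hZ : Z ∈ X := by
    rw [hct.2.2.2]
    intro W hW f
    have h1 : z ≫ f = 0 := rigid_of_ct hct hl.1 hW _
    obtain ⟨u, hu⟩ := Triangle.yoneda_exact₃ _ htri f h1
    obtain ⟨u₀, hu₀⟩ := (shiftFunctor C (1 : ℤ)).map_surjective u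
    obtain ⟨u₁, hu₁⟩ := hl.2 W hW u₀
    have h31 : c ≫ (shiftFunctor C (1 : ℤ)).map l = 0 := comp_distTriang_mor_zero₃₁ _ htri
    rw [hu, ← hu₀, ← hu₁]
    change c ≫ (shiftFunctor C (1 : ℤ)).map (l ≫ u₁) = 0
    rw [Functor.map_comp, ← Category.assoc, h31, zero_comp]
  exact ⟨X₀, hl.1, l, hl, Z, hZ, z, c, htri⟩

/-- Cokernel package for the quotient category, stated at the level of `C`. -/
lemma coker_pack (hX : GoodSub X) (hct : ClusterTilting X) {A B : C} (f : A ⟶ B) :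
    ∃ (Cn : C) (c : B ⟶ Cn),
      FactorsThru X (f ≫ c) ∧
      (∀ {T : C} (t : B ⟶ T), FactorsThru X (f ≫ t) → ∃ s : Cn ⟶ T, c ≫ s = t) ∧
      (∀ {T : C} (s : Cn ⟶ T), FactorsThru X (c ≫ s) → FactorsThru X s) := by
  obtain ⟨XA, α, hα⟩ := hct.2.1 A
  have hXA : XA ∈ X := hα.1
  set ψ : A ⟶ B ⊞ XA := biprod.lift f α with hψdef
  obtain ⟨Cn, g', h', htri⟩ := Pretriangulated.distinguished_cocone_triangle ψ
  have hψg' : ψ ≫ g' = 0 := comp_distTriang_mor_zero₁₂ _ htri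
  have hψexp : ψ = f ≫ biprod.inl + α ≫ biprod.inr := by
    apply biprod.hom_ext <;> simp [hψdef]
  refine ⟨Cn, biprod.inl ≫ g', ?_, ?_, ?_⟩
  · -- `f ≫ c` factors through `X`
    have h0 : f ≫ (biprod.inl ≫ g') + α ≫ (biprod.inr ≫ g') = 0 := by
      have := hψg'
      rw [hψexp, Preadditive.add_comp, Category.assoc, Category.assoc] at this
      exact this
    rw [eq_neg_of_add_eq_zero_left h0]
    exact fac_neg (fac_comp_left _ (fac_of_src_mem hXA _))
  · -- weak cokernel property
    rintro T t ⟨W, hW, a, b, hab⟩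
    obtain ⟨a', ha'⟩ := hα.2 W hW a
    have hd : ψ ≫ biprod.desc t (-(a' ≫ b)) = 0 := by
      rw [hψdef, biprod.lift_desc, Preadditive.comp_neg, ← Category.assoc, ha', hab,
        add_neg_cancel]
    obtain ⟨s, hs⟩ : ∃ s : Cn ⟶ T, biprod.desc t (-(a' ≫ b)) = g' ≫ s :=
      Triangle.yoneda_exact₂ _ htri _ hd
    refine ⟨s, ?_⟩
    rw [Category.assoc, ← hs]
    exact biprod.inl_desc _ _
  · -- epi property
    rintro T s ⟨W, hW, p, q, hpq⟩
    have hmem : (W ⊞ XA : C) ∈ X := biprod_mem hX hW hXA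
    set P : B ⊞ XA ⟶ W ⊞ XA := biprod.desc (p ≫ biprod.inl) biprod.inr with hPdef
    set Qm : W ⊞ XA ⟶ T := biprod.desc q (biprod.inr ≫ g' ≫ s) with hQdef
    have hPQ : P ≫ Qm = g' ≫ s := by
      apply biprod.hom_ext'
      · rw [hPdef, hQdef]
        simp only [biprod.inl_desc_assoc, Category.assoc, biprod.inl_desc]
        rw [← Category.assoc, hpq, Category.assoc]
      · rw [hPdef, hQdef]
        simp
    obtain ⟨cc, hcc⟩ := hα.2 _ hmem (ψ ≫ P)
    have hψP' : ψ ≫ (P - biprod.snd ≫ cc) = 0 := by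
      rw [Preadditive.comp_sub, ← Category.assoc]
      have : ψ ≫ biprod.snd = α := by simp [hψdef]
      rw [this, hcc, sub_self]
    obtain ⟨m, hm⟩ : ∃ m : Cn ⟶ W ⊞ XA, P - biprod.snd ≫ cc = g' ≫ m :=
      Triangle.yoneda_exact₂ _ htri _ hψP'
    set s₁ : Cn ⟶ T := s - m ≫ Qm with hs₁def
    have key : g' ≫ s₁ = biprod.snd ≫ cc ≫ Qm := by
      rw [hs₁def, Preadditive.comp_sub, ← Category.assoc, ← hm, Preadditive.sub_comp, hPQ,
        sub_sub_cancel, Category.assoc]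
    -- now use the right approximation triangle of `T`
    obtain ⟨X₀, hX₀, gT, hgT, X₁, hX₁, hT, wT, htriT⟩ := right_tri hX hct T
    obtain ⟨e', he'⟩ := hgT.2 XA hXA (cc ≫ Qm)
    have hgv : g' ≫ s₁ ≫ hT = 0 := by
      have h12T : gT ≫ hT = 0 := comp_distTriang_mor_zero₁₂ _ htriT
      have hassoc : g' ≫ s₁ ≫ hT = (g' ≫ s₁) ≫ hT := (Category.assoc _ _ _).symm
      rw [hassoc, key, ← he']
      simp only [Category.assoc]
      rw [h12T]
      simp
    obtain ⟨w, hw⟩ : ∃ w : A⟦(1 : ℤ)⟧ ⟶ X₁⟦(1 : ℤ)⟧, s₁ ≫ hT = h' ≫ w :=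
      Triangle.yoneda_exact₃ _ htri _ hgv
    obtain ⟨w₀, hw₀⟩ := (shiftFunctor C (1 : ℤ)).map_surjective w
    obtain ⟨w₁, hw₁⟩ := hα.2 X₁ hX₁ w₀
    have hv0 : s₁ ≫ hT = 0 := by
      have hψα : α = ψ ≫ biprod.snd := by simp [hψdef]
      have h31 : h' ≫ (shiftFunctor C (1 : ℤ)).map ψ = 0 := comp_distTriang_mor_zero₃₁ _ htri
      rw [hw, ← hw₀, ← hw₁, hψα]
      rw [Category.assoc, Functor.map_comp, Functor.map_comp, ← Category.assoc, ← Category.assoc]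
      rw [h31, zero_comp, zero_comp]
    obtain ⟨s₂, hs₂⟩ : ∃ s₂ : Cn ⟶ X₀, s₁ = s₂ ≫ gT :=
      Triangle.coyoneda_exact₂ _ htriT s₁ hv0
    have hfacs₁ : FactorsThru X s₁ := by
      rw [hs₂]; exact fac_comp_left _ (fac_of_src_mem hX₀ _)
    have : s = s₁ + m ≫ Qm := by rw [hs₁def]; abel
    rw [this]
    exact fac_add hX hfacs₁ (fac_comp_right _ (fac_of_tgt_mem hmem m))

/-- Kernel package for the quotient category, stated at the level of `C`. -/
lemma ker_pack (hX : GoodSub X) (hct : ClusterTilting X) {A B : C} (f : A ⟶ B) :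
    ∃ (K : C) (κ : K ⟶ A),
      FactorsThru X (κ ≫ f) ∧
      (∀ {T : C} (t : T ⟶ A), FactorsThru X (t ≫ f) → ∃ s : T ⟶ K, s ≫ κ = t) ∧
      (∀ {T : C} (s : T ⟶ K), FactorsThru X (s ≫ κ) → FactorsThru X s) := by
  obtain ⟨XB, β, hβ⟩ := hct.1 B
  have hXB : XB ∈ X := hβ.1
  set φ : A ⊞ XB ⟶ B := biprod.desc f β with hφdef
  obtain ⟨K, k, h, htri⟩ := Pretriangulated.distinguished_cocone_triangle₁ φ
  have hkφ : k ≫ φ = 0 := comp_distTriang_mor_zero₁₂ _ htri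
  have hφexp : φ = biprod.fst ≫ f + biprod.snd ≫ β := by
    apply biprod.hom_ext' <;> simp [hφdef]
  refine ⟨K, k ≫ biprod.fst, ?_, ?_, ?_⟩
  · have h0 : (k ≫ biprod.fst) ≫ f + (k ≫ biprod.snd) ≫ β = 0 := by
      have := hkφ
      rw [hφexp, Preadditive.comp_add, ← Category.assoc, ← Category.assoc] at this
      exact this
    rw [eq_neg_of_add_eq_zero_left h0]
    exact fac_neg (fac_comp_right _ (fac_of_tgt_mem hXB _))
  · rintro T t ⟨W, hW, a, b, hab⟩
    obtain ⟨b', hb'⟩ := hβ.2 W hW b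
    have hu : biprod.lift t (-(a ≫ b')) ≫ φ = 0 := by
      rw [hφdef, biprod.lift_desc, Preadditive.neg_comp, Category.assoc, hb', hab,
        add_neg_cancel]
    obtain ⟨s, hs⟩ : ∃ s : T ⟶ K, biprod.lift t (-(a ≫ b')) = s ≫ k :=
      Triangle.coyoneda_exact₂ _ htri _ hu
    exact ⟨s, by rw [← Category.assoc, ← hs, biprod.lift_fst]⟩
  · rintro T s ⟨W, hW, p, q, hpq⟩
    have hmem : (W ⊞ XB : C) ∈ X := biprod_mem hX hW hXB
    set u₁ : T ⟶ W ⊞ XB := biprod.lift p (s ≫ k ≫ biprod.snd) with hu₁def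
    set u₂ : W ⊞ XB ⟶ A ⊞ XB := biprod.map q (𝟙 XB) with hu₂def
    have hu₁₂ : u₁ ≫ u₂ = s ≫ k := by
      apply biprod.hom_ext
      · rw [hu₁def, hu₂def]
        simp only [Category.assoc, biprod.map_fst, biprod.lift_fst_assoc]
        rw [hpq]
      · rw [hu₁def, hu₂def]; simp
    obtain ⟨cc, hcc⟩ := hβ.2 _ hmem (u₂ ≫ φ)
    have hu₂' : (u₂ - cc ≫ biprod.inr) ≫ φ = 0 := by
      rw [Preadditive.sub_comp, Category.assoc]
      have : biprod.inr ≫ φ = β := by simp [hφdef]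
      rw [this, hcc, sub_self]
    obtain ⟨m, hm⟩ : ∃ m : W ⊞ XB ⟶ K, u₂ - cc ≫ biprod.inr = m ≫ k :=
      Triangle.coyoneda_exact₂ _ htri _ hu₂'
    set s₁ : T ⟶ K := s - u₁ ≫ m with hs₁def
    have key : s₁ ≫ k = (u₁ ≫ cc) ≫ biprod.inr := by
      rw [hs₁def, Preadditive.sub_comp, Category.assoc, ← hm, Preadditive.comp_sub, hu₁₂,
        sub_sub_cancel, ← Category.assoc]
    obtain ⟨X₀, hX₀, l, hl, X₁, hX₁, z, ctr, htriL⟩ := left_tri hX hct T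
    obtain ⟨e'', he''⟩ := hl.2 XB hXB (u₁ ≫ cc)
    have htriLinv := inv_rot_of_distTriang _ htriL
    set y : (X₁)⟦(-1 : ℤ)⟧ ⟶ T := (Triangle.mk l z ctr).invRotate.mor₁ with hydef
    have hyl : y ≫ l = 0 := by
      rw [hydef]
      exact comp_distTriang_mor_zero₁₂ _ htriLinv
    have hvk : (y ≫ s₁) ≫ k = 0 := by
      rw [Category.assoc, key, ← he'']
      rw [show y ≫ (l ≫ e'') ≫ biprod.inr = (y ≫ l) ≫ (e'' ≫ biprod.inr) by simp]
      rw [hyl, zero_comp]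
    have htriKinv := inv_rot_of_distTriang _ htri
    obtain ⟨w, hw⟩ : ∃ w : X₁⟦(-1 : ℤ)⟧ ⟶ B⟦(-1 : ℤ)⟧,
        y ≫ s₁ = w ≫ (Triangle.mk k φ h).invRotate.mor₁ :=
      Triangle.coyoneda_exact₂ _ htriKinv _ hvk
    -- `(Triangle.mk k φ h).invRotate.mor₁` kills `φ⟦-1⟧` on the left
    have hφρ : (shiftFunctor C (-1 : ℤ)).map φ ≫ (Triangle.mk k φ h).invRotate.mor₁ = 0 := by
      have h23 : φ ≫ h = 0 := comp_distTriang_mor_zero₂₃ _ htri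
      change (shiftFunctor C (-1 : ℤ)).map φ ≫ (-((shiftFunctor C (-1 : ℤ)).map h ≫
        (shiftFunctorCompIsoId C (1 : ℤ) (-1 : ℤ) (by norm_num)).hom.app K)) = 0
      rw [Preadditive.comp_neg, ← Category.assoc, ← Functor.map_comp, h23]
      simp
    obtain ⟨w₀, hw₀⟩ := (shiftFunctor C (-1 : ℤ)).map_surjective w
    obtain ⟨c', hc'⟩ := hβ.2 X₁ hX₁ w₀
    have hys₁ : y ≫ s₁ = 0 := by
      have hβφ : β = biprod.inr ≫ φ := by simp [hφdef]
      rw [hw, ← hw₀, ← hc', hβφ]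
      rw [Functor.map_comp, Functor.map_comp]; erw [Category.assoc, Category.assoc, hφρ]
      simp
      rfl
    obtain ⟨n, hn⟩ : ∃ n : X₀ ⟶ K, s₁ = l ≫ n :=
      Triangle.yoneda_exact₂ _ htriLinv s₁ hys₁
    have hfacs₁ : FactorsThru X s₁ := by
      rw [hn]
      change FactorsThru X (l ≫ n)
      exact fac_comp_right _ (fac_of_tgt_mem hX₀ l)
    have : s = s₁ + u₁ ≫ m := by rw [hs₁def]; abel
    rw [this]
    exact fac_add hX hfacs₁ (fac_comp_right _ (fac_of_tgt_mem hmem u₁))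

lemma shift_biprod_ext_pos {P Q W : C} (φ : W ⟶ (P ⊞ Q)⟦(1 : ℤ)⟧)
    (h1 : φ ≫ (shiftFunctor C (1 : ℤ)).map biprod.fst = 0)
    (h2 : φ ≫ (shiftFunctor C (1 : ℤ)).map biprod.snd = 0) : φ = 0 := by
  have htot : (biprod.fst ≫ biprod.inl + biprod.snd ≫ biprod.inr : P ⊞ Q ⟶ P ⊞ Q) = 𝟙 _ :=
    biprod.total
  calc φ = φ ≫ (shiftFunctor C (1 : ℤ)).map (𝟙 _) := by simp
    _ = 0 := by
      rw [← htot, Functor.map_add, Preadditive.comp_add, Functor.map_comp, Functor.map_comp,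
        ← Category.assoc, ← Category.assoc, h1, h2, zero_comp, zero_comp, add_zero]

lemma shift_biprod_ext_neg {P Q W : C} (φ : (P ⊞ Q)⟦(-1 : ℤ)⟧ ⟶ W)
    (h1 : (shiftFunctor C (-1 : ℤ)).map biprod.inl ≫ φ = 0)
    (h2 : (shiftFunctor C (-1 : ℤ)).map biprod.inr ≫ φ = 0) : φ = 0 := by
  have htot : (biprod.fst ≫ biprod.inl + biprod.snd ≫ biprod.inr : P ⊞ Q ⟶ P ⊞ Q) = 𝟙 _ :=
    biprod.total
  calc φ = (shiftFunctor C (-1 : ℤ)).map (𝟙 _) ≫ φ := by simp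
    _ = 0 := by
      rw [← htot, Functor.map_add, Preadditive.add_comp, Functor.map_comp, Functor.map_comp,
        Category.assoc, Category.assoc, h1, h2, comp_zero, comp_zero, add_zero]

/-- Every morphism whose quotient class is monic is, up to `X`, a kernel of a map to a cone. -/
lemma normal_mono_pack (hX : GoodSub X) (hct : ClusterTilting X) {A B : C} (f : A ⟶ B)
    (hmono : ∀ {T : C} (t : T ⟶ A), FactorsThru X (t ≫ f) → FactorsThru X t) :
    ∃ (D : C) (h : B ⟶ D), f ≫ h = 0 ∧
      (∀ {T : C} (t : T ⟶ B), FactorsThru X (t ≫ h) →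
        ∃ s : T ⟶ A, FactorsThru X (s ≫ f - t)) := by
  obtain ⟨XB, β, hβ⟩ := hct.1 B
  have hXB : XB ∈ X := hβ.1
  set φ : A ⊞ XB ⟶ B := biprod.desc f β with hφdef
  obtain ⟨K, k, h, htri⟩ := Pretriangulated.distinguished_cocone_triangle₁ φ
  have hkφ : k ≫ φ = 0 := comp_distTriang_mor_zero₁₂ _ htri
  have hφh : φ ≫ h = 0 := comp_distTriang_mor_zero₂₃ _ htri
  have hφexp : φ = biprod.fst ≫ f + biprod.snd ≫ β := by
    apply biprod.hom_ext' <;> simp [hφdef]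
  have hσf : FactorsThru X ((k ≫ biprod.fst) ≫ f) := by
    have h0 : (k ≫ biprod.fst) ≫ f + (k ≫ biprod.snd) ≫ β = 0 := by
      have := hkφ
      rw [hφexp, Preadditive.comp_add, ← Category.assoc, ← Category.assoc] at this
      exact this
    rw [eq_neg_of_add_eq_zero_left h0]
    exact fac_neg (fac_comp_right _ (fac_of_tgt_mem hXB _))
  obtain ⟨W₀, hW₀, p₀, q₀, hpq₀⟩ := hmono _ hσf
  refine ⟨K⟦(1 : ℤ)⟧, h, ?_, ?_⟩
  · have hfφ : f = biprod.inl ≫ φ := by simp [hφdef]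
    rw [hfφ, Category.assoc, hφh, comp_zero]
  · rintro T t ⟨W, hW, a, b, hab⟩
    have htriR := rot_of_distTriang _ htri
    have hbk : b ≫ (Triangle.mk k φ h).rotate.mor₃ = 0 := by
      have hmor : (Triangle.mk k φ h).rotate.mor₃ = -((shiftFunctor C (1 : ℤ)).map k) := rfl
      rw [hmor]; erw [Preadditive.comp_neg, neg_eq_zero]
      change b ≫ (shiftFunctor C (1 : ℤ)).map k = 0
      apply shift_biprod_ext_pos
      · rw [Category.assoc, ← Functor.map_comp, ← hpq₀, Functor.map_comp, ← Category.assoc]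
        rw [rigid_of_ct hct hW hW₀ (b ≫ (shiftFunctor C (1 : ℤ)).map p₀), zero_comp]
      · rw [Category.assoc, ← Functor.map_comp]
        exact rigid_of_ct hct hW hXB _
    obtain ⟨c, hc⟩ : ∃ c : W ⟶ B, b = c ≫ h :=
      Triangle.coyoneda_exact₃ _ htriR b hbk
    have h0 : (t - a ≫ c) ≫ h = 0 := by
      rw [Preadditive.sub_comp, Category.assoc, ← hc, hab, sub_self]
    obtain ⟨u, hu⟩ : ∃ u : T ⟶ A ⊞ XB, t - a ≫ c = u ≫ φ :=
      Triangle.coyoneda_exact₃ _ htri _ h0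
    refine ⟨u ≫ biprod.fst, ?_⟩
    have h2 := hu
    rw [hφexp, Preadditive.comp_add, ← Category.assoc, ← Category.assoc] at h2
    have e1 : (u ≫ biprod.fst) ≫ f - t = -((u ≫ biprod.snd) ≫ β) + -(a ≫ c) := by
      rw [sub_eq_iff_eq_add] at h2
      rw [h2]; abel
    rw [e1]
    exact fac_add hX (fac_neg (fac_comp_right _ (fac_of_tgt_mem hXB _)))
      (fac_neg (fac_comp_right _ (fac_of_tgt_mem hW a)))

/-- Every morphism whose quotient class is epic is, up to `X`, a cokernel. -/
lemma normal_epi_pack (hX : GoodSub X) (hct : ClusterTilting X) {A B : C} (f : A ⟶ B)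
    (hepi : ∀ {T : C} (t : B ⟶ T), FactorsThru X (f ≫ t) → FactorsThru X t) :
    ∃ (D : C) (ρ : D ⟶ A), ρ ≫ f = 0 ∧
      (∀ {T : C} (t : A ⟶ T), FactorsThru X (ρ ≫ t) →
        ∃ s : B ⟶ T, FactorsThru X (f ≫ s - t)) := by
  obtain ⟨XA, α, hα⟩ := hct.2.1 A
  have hXA : XA ∈ X := hα.1
  set ψ : A ⟶ B ⊞ XA := biprod.lift f α with hψdef
  obtain ⟨Cn, g, h, htri⟩ := Pretriangulated.distinguished_cocone_triangle ψ
  have hψg : ψ ≫ g = 0 := comp_distTriang_mor_zero₁₂ _ htri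
  have hψexp : ψ = f ≫ biprod.inl + α ≫ biprod.inr := by
    apply biprod.hom_ext <;> simp [hψdef]
  have hfc : FactorsThru X (f ≫ (biprod.inl ≫ g)) := by
    have h0 : f ≫ (biprod.inl ≫ g) + α ≫ (biprod.inr ≫ g) = 0 := by
      have := hψg
      rw [hψexp, Preadditive.add_comp, Category.assoc, Category.assoc] at this
      exact this
    rw [eq_neg_of_add_eq_zero_left h0]
    exact fac_neg (fac_comp_left _ (fac_of_src_mem hXA _))
  obtain ⟨W₀, hW₀, p₀, q₀, hpq₀⟩ := hepi _ hfc
  have htriR := inv_rot_of_distTriang _ htri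
  have htriRR := inv_rot_of_distTriang _ htriR
  set ρ : Cn⟦(-1 : ℤ)⟧ ⟶ A := (Triangle.mk ψ g h).invRotate.mor₁ with hρdef
  have hρψ : ρ ≫ ψ = 0 := by
    rw [hρdef]
    exact comp_distTriang_mor_zero₁₂ _ htriR
  refine ⟨Cn⟦(-1 : ℤ)⟧, ρ, ?_, ?_⟩
  · have hfψ : f = ψ ≫ biprod.fst := by simp [hψdef]
    rw [hfψ, ← Category.assoc, hρψ, zero_comp]
  · rintro T t ⟨W, hW, a, b, hab⟩
    set E : Cn ⟶ (Cn⟦(-1 : ℤ)⟧)⟦(1 : ℤ)⟧ :=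
      (shiftEquiv C (1 : ℤ)).counitIso.inv.app Cn with hEdef
    set U : ((Cn⟦(-1 : ℤ)⟧)⟦(1 : ℤ)⟧)⟦(-1 : ℤ)⟧ ⟶ Cn⟦(-1 : ℤ)⟧ :=
      (shiftEquiv C (1 : ℤ)).unitIso.inv.app (Cn⟦(-1 : ℤ)⟧) with hUdef
    have hmor : (Triangle.mk ψ g h).invRotate.invRotate.mor₁ =
        -((shiftFunctor C (-1 : ℤ)).map (g ≫ E) ≫ U) := rfl
    have hTRR1 : (Triangle.mk ψ g h).invRotate.invRotate.mor₁ ≫ a = 0 := by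
      change (-((shiftFunctor C (-1 : ℤ)).map (g ≫ E) ≫ U)) ≫ a = 0
      rw [Preadditive.neg_comp, neg_eq_zero, Functor.map_comp, Category.assoc,
        Category.assoc]
      apply shift_biprod_ext_neg
      · rw [← Functor.map_comp_assoc, ← hpq₀, Functor.map_comp_assoc]
        have hz : (shiftFunctor C (-1 : ℤ)).map q₀ ≫ (shiftFunctor C (-1 : ℤ)).map E ≫ U ≫ a = 0 :=
          negshift_vanish hct hW₀ hW _
        rw [hz, comp_zero]
      · rw [← Functor.map_comp_assoc]
        exact negshift_vanish hct hXA hW _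
    obtain ⟨c, hc⟩ : ∃ c : A ⟶ W, a = ρ ≫ c :=
      Triangle.yoneda_exact₂ _ htriRR a hTRR1
    have h0 : ρ ≫ (t - c ≫ b) = 0 := by
      rw [Preadditive.comp_sub, ← Category.assoc, ← hc, hab, sub_self]
    obtain ⟨u, hu⟩ : ∃ u : B ⊞ XA ⟶ T, t - c ≫ b = ψ ≫ u :=
      Triangle.yoneda_exact₂ _ htriR _ h0
    refine ⟨biprod.inl ≫ u, ?_⟩
    have h2 := hu
    rw [hψexp, Preadditive.add_comp, Category.assoc, Category.assoc] at h2
    have e1 : f ≫ (biprod.inl ≫ u) - t = -(α ≫ (biprod.inr ≫ u)) + -(c ≫ b) := by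
      rw [sub_eq_iff_eq_add] at h2
      rw [h2]; abel
    rw [e1]
    exact fac_add hX (fac_neg (fac_comp_left _ (fac_of_src_mem hXA _)))
      (fac_neg (fac_comp_right _ (fac_of_tgt_mem hW c)))

end KZProof


/-- **Koenig–Zhu.** The quotient of a triangulated category by a cluster tilting
subcategory is abelian. -/
theorem quotient_by_cluster_tilting_is_abelian {C : Type u} [Category.{v} C] [Limits.HasZeroObject C] [Preadditive C]
    [HasShift C ℤ] [∀ n : ℤ, (shiftFunctor C n).Additive] [Pretriangulated C]
    [IsTriangulated C]
    (X : Set C) (hX : GoodSub X) (hct : ClusterTilting X) :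
    Nonempty (Abelian (CategoryTheory.Quotient (xRel X))) := by
  haveI : Congruence (xRel X) := congruence_xrel hX
  have hadd : ∀ ⦃A B : C⦄ (f₁ f₂ g₁ g₂ : A ⟶ B),
      xRel X f₁ f₂ → xRel X g₁ g₂ → xRel X (f₁ + g₁) (f₂ + g₂) := by
    intro A B f₁ f₂ g₁ g₂ h₁ h₂
    have h3 := fac_add hX h₁ h₂
    have h4 : FactorsThru X ((f₁ + g₁) - (f₂ + g₂)) := by
      rwa [add_sub_add_comm]
    exact h4
  letI : Preadditive (CategoryTheory.Quotient (xRel X)) := Quotient.preadditive _ hadd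
  haveI : (Quotient.functor (xRel X)).Additive := Quotient.functor_additive _ hadd
  -- basic facts about the quotient functor
  have hzero : ∀ {A B : C} (f : A ⟶ B),
      (Quotient.functor (xRel X)).map f = 0 ↔ FactorsThru X f := by
    intro A B f
    constructor
    · intro hf
      have h1 : (Quotient.functor (xRel X)).map f = (Quotient.functor (xRel X)).map 0 := by
        rw [hf, Functor.map_zero]
      have h2 := (Quotient.functor_map_eq_iff (xRel X) f 0).mp h1
      have h3 : FactorsThru X (f - 0) := h2
      rwa [sub_zero] at h3
    · intro hf
      have h2 : xRel X f 0 := by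
        show FactorsThru X (f - 0)
        rwa [sub_zero]
      have h3 := (Quotient.functor_map_eq_iff (xRel X) f 0).mpr h2
      rw [h3, Functor.map_zero]
  -- the quotient has a zero object
  obtain ⟨Z0, hZ0⟩ := Limits.HasZeroObject.zero (C := C)
  haveI : Limits.HasZeroObject (CategoryTheory.Quotient (xRel X)) := by
    refine ⟨(Quotient.functor (xRel X)).obj Z0, ?_⟩
    rw [Limits.IsZero.iff_id_eq_zero, ← (Quotient.functor (xRel X)).map_id, hzero]
    exact fac_of_src_mem (hX.1 _ hZ0) _
  -- binary biproducts in the quotient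
  haveI : Limits.HasBinaryBiproducts (CategoryTheory.Quotient (xRel X)) := by
    constructor
    intro P R
    apply Limits.HasBinaryBiproduct.mk
    refine ⟨{ pt := (Quotient.functor (xRel X)).obj (P.as ⊞ R.as)
              fst := (Quotient.functor (xRel X)).map biprod.fst
              snd := (Quotient.functor (xRel X)).map biprod.snd
              inl := (Quotient.functor (xRel X)).map biprod.inl
              inr := (Quotient.functor (xRel X)).map biprod.inr
              inl_fst := by rw [← Functor.map_comp, biprod.inl_fst, CategoryTheory.Functor.map_id]; rfl
              inl_snd := by rw [← Functor.map_comp, biprod.inl_snd, Functor.map_zero]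
              inr_fst := by rw [← Functor.map_comp, biprod.inr_fst, Functor.map_zero]
              inr_snd := by rw [← Functor.map_comp, biprod.inr_snd, CategoryTheory.Functor.map_id]; rfl }, ?_⟩
    apply Limits.isBinaryBilimitOfTotal
    dsimp only
    simp only [← Functor.map_comp, ← Functor.map_add, biprod.total, CategoryTheory.Functor.map_id]
  haveI : Limits.HasFiniteProducts (CategoryTheory.Quotient (xRel X)) :=
    hasFiniteProducts_of_has_binary_and_terminal
  -- kernels
  haveI : Limits.HasKernels (CategoryTheory.Quotient (xRel X)) := by
    constructor
    intro P R φ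
    obtain ⟨f, rfl⟩ := (Quotient.functor (xRel X)).map_surjective φ
    obtain ⟨K, κ, h1, h2, h3⟩ := ker_pack hX hct f
    haveI hmono : Mono ((Quotient.functor (xRel X)).map κ) := by
      apply Preadditive.mono_of_cancel_zero
      intro P' u hu
      obtain ⟨u₀, rfl⟩ := (Quotient.functor (xRel X)).map_surjective u
      rw [← Functor.map_comp, hzero] at hu
      rw [hzero]
      exact h3 _ hu
    have w : (Quotient.functor (xRel X)).map κ ≫ (Quotient.functor (xRel X)).map f = 0 := by
      rw [← Functor.map_comp, hzero]; exact h1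
    apply Limits.HasLimit.mk
    refine ⟨_, Limits.KernelFork.IsLimit.ofι' ((Quotient.functor (xRel X)).map κ) w ?_⟩
    intro A' u hu
    have hfacu : FactorsThru X
        (((Quotient.functor (xRel X)).map_surjective u).choose ≫ f) := by
      apply (hzero _).mp
      rw [Functor.map_comp, ((Quotient.functor (xRel X)).map_surjective u).choose_spec]
      exact hu
    refine ⟨(Quotient.functor (xRel X)).map (h2 _ hfacu).choose, ?_⟩
    rw [← Functor.map_comp, (h2 _ hfacu).choose_spec,
      ((Quotient.functor (xRel X)).map_surjective u).choose_spec]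
  -- cokernels
  haveI : Limits.HasCokernels (CategoryTheory.Quotient (xRel X)) := by
    constructor
    intro P R φ
    obtain ⟨f, rfl⟩ := (Quotient.functor (xRel X)).map_surjective φ
    obtain ⟨Cn, c, h1, h2, h3⟩ := coker_pack hX hct f
    haveI hepi : Epi ((Quotient.functor (xRel X)).map c) := by
      apply Preadditive.epi_of_cancel_zero
      intro P' u hu
      obtain ⟨u₀, rfl⟩ := (Quotient.functor (xRel X)).map_surjective u
      rw [← Functor.map_comp, hzero] at hu
      rw [hzero]
      exact h3 _ hu
    have w : (Quotient.functor (xRel X)).map f ≫ (Quotient.functor (xRel X)).map c = 0 := by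
      rw [← Functor.map_comp, hzero]; exact h1
    apply Limits.HasColimit.mk
    refine ⟨_, Limits.CokernelCofork.IsColimit.ofπ' ((Quotient.functor (xRel X)).map c) w ?_⟩
    intro A' u hu
    have hfacu : FactorsThru X
        (f ≫ ((Quotient.functor (xRel X)).map_surjective u).choose) := by
      apply (hzero _).mp
      rw [Functor.map_comp, ((Quotient.functor (xRel X)).map_surjective u).choose_spec]
      exact hu
    refine ⟨(Quotient.functor (xRel X)).map (h2 _ hfacu).choose, ?_⟩
    rw [← Functor.map_comp, (h2 _ hfacu).choose_spec,
      ((Quotient.functor (xRel X)).map_surjective u).choose_spec]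
  -- every mono is normal
  haveI : CategoryTheory.IsNormalMonoCategory (CategoryTheory.Quotient (xRel X)) := by
    constructor
    intro P R φ hφmono
    have hf₀ : (Quotient.functor (xRel X)).map
        ((Quotient.functor (xRel X)).map_surjective φ).choose = φ :=
      ((Quotient.functor (xRel X)).map_surjective φ).choose_spec
    set f₀ := ((Quotient.functor (xRel X)).map_surjective φ).choose with hf₀def
    have hmono : ∀ {T : C} (t : T ⟶ P.as), FactorsThru X (t ≫ f₀) → FactorsThru X t := by
      intro T t ht
      rw [← hzero]
      have h5 : (Quotient.functor (xRel X)).map t ≫ φ = 0 ≫ φ := by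
        rw [zero_comp, ← hf₀, ← Functor.map_comp, hzero]
        exact ht
      exact (cancel_mono φ).mp h5
    have hpk := normal_mono_pack hX hct f₀ hmono
    have hw0 : f₀ ≫ hpk.choose_spec.choose = 0 := hpk.choose_spec.choose_spec.1
    have hfac : ∀ {T : C} (t : T ⟶ R.as), FactorsThru X (t ≫ hpk.choose_spec.choose) →
        ∃ s : T ⟶ P.as, FactorsThru X (s ≫ f₀ - t) := hpk.choose_spec.choose_spec.2
    have w : φ ≫ (Quotient.functor (xRel X)).map hpk.choose_spec.choose = 0 := by
      rw [← hf₀, ← Functor.map_comp, hw0, Functor.map_zero]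
    refine ⟨?_⟩
    refine { Z := (Quotient.functor (xRel X)).obj hpk.choose,
             g := (Quotient.functor (xRel X)).map hpk.choose_spec.choose,
             w := w, isLimit := ?_ }
    refine Limits.KernelFork.IsLimit.ofι' φ w ?_
    intro A' u hu
    have hfacu : FactorsThru X (((Quotient.functor (xRel X)).map_surjective u).choose ≫
        hpk.choose_spec.choose) := by
      apply (hzero _).mp
      rw [Functor.map_comp, ((Quotient.functor (xRel X)).map_surjective u).choose_spec]
      exact hu
    refine ⟨(Quotient.functor (xRel X)).map
      (hfac ((Quotient.functor (xRel X)).map_surjective u).choose hfacu).choose, ?_⟩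
    have hz := (hzero _).mpr
      (hfac ((Quotient.functor (xRel X)).map_surjective u).choose hfacu).choose_spec
    rw [Functor.map_sub, Functor.map_comp, sub_eq_zero, hf₀,
      ((Quotient.functor (xRel X)).map_surjective u).choose_spec] at hz
    exact hz
  -- every epi is normal
  haveI : CategoryTheory.IsNormalEpiCategory (CategoryTheory.Quotient (xRel X)) := by
    constructor
    intro P R φ hφepi
    have hf₀ : (Quotient.functor (xRel X)).map
        ((Quotient.functor (xRel X)).map_surjective φ).choose = φ :=
      ((Quotient.functor (xRel X)).map_surjective φ).choose_spec
    set f₀ := ((Quotient.functor (xRel X)).map_surjective φ).choose with hf₀def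
    have hepi : ∀ {T : C} (t : R.as ⟶ T), FactorsThru X (f₀ ≫ t) → FactorsThru X t := by
      intro T t ht
      rw [← hzero]
      have h5 : φ ≫ (Quotient.functor (xRel X)).map t = φ ≫ 0 := by
        rw [comp_zero, ← hf₀, ← Functor.map_comp, hzero]
        exact ht
      exact (cancel_epi φ).mp h5
    have hpk := normal_epi_pack hX hct f₀ hepi
    have hw0 : hpk.choose_spec.choose ≫ f₀ = 0 := hpk.choose_spec.choose_spec.1
    have hfac : ∀ {T : C} (t : P.as ⟶ T), FactorsThru X (hpk.choose_spec.choose ≫ t) →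
        ∃ s : R.as ⟶ T, FactorsThru X (f₀ ≫ s - t) := hpk.choose_spec.choose_spec.2
    have w : (Quotient.functor (xRel X)).map hpk.choose_spec.choose ≫ φ = 0 := by
      rw [← hf₀, ← Functor.map_comp, hw0, Functor.map_zero]
    refine ⟨?_⟩
    refine { W := (Quotient.functor (xRel X)).obj hpk.choose,
             g := (Quotient.functor (xRel X)).map hpk.choose_spec.choose,
             w := w, isColimit := ?_ }
    refine Limits.CokernelCofork.IsColimit.ofπ' φ w ?_
    intro A' u hu
    have hfacu : FactorsThru X (hpk.choose_spec.choose ≫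
        ((Quotient.functor (xRel X)).map_surjective u).choose) := by
      apply (hzero _).mp
      rw [Functor.map_comp, ((Quotient.functor (xRel X)).map_surjective u).choose_spec]
      exact hu
    refine ⟨(Quotient.functor (xRel X)).map
      (hfac ((Quotient.functor (xRel X)).map_surjective u).choose hfacu).choose, ?_⟩
    have hz := (hzero _).mpr
      (hfac ((Quotient.functor (xRel X)).map_surjective u).choose hfacu).choose_spec
    rw [Functor.map_sub, Functor.map_comp, sub_eq_zero, hf₀,
      ((Quotient.functor (xRel X)).map_surjective u).choose_spec] at hz
    exact hz
  exact ⟨{ toPreadditive := inferInstance, toIsNormalMonoCategory := inferInstance,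
           toIsNormalEpiCategory := inferInstance }⟩


end ClusterNote
end

section
/- Let C be a triangulated category and X a subcategory of C that is contravariantly finite and satisfies X = {M in C : Hom_C(X, M[1]) = 0 for all X in X}. Then X is cluster tilting; that is, X is also covariantly finite and X = {M in C : Hom_C(M, X[1]) = 0 for all X in X}. -/
open CategoryTheory CategoryTheory.Limits CategoryTheory.Pretriangulated

universe v u

/-!
`X = {M : Hom(X, M[1]) = 0}` makes `X` rigid. Given `M`, complete a right `X`-approximation
`X₀ ⟶ M[1]` to a triangle `M ⟶ Y ⟶ X₀ ⟶ M[1]`: the approximation property kills `Hom(X, Y[1])`,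
so `Y ∈ X`, and rigidity makes `M ⟶ Y` a left approximation. If `Hom(M, X[1]) = 0`, complete a
right approximation `X₀ ⟶ M` to `N ⟶ X₀ ⟶ M ⟶ N[1]`; again `N ∈ X`, so the connecting morphism
vanishes, `X₀ ⟶ M` is a split epimorphism and `M` is a summand of `X₀`.
-/

namespace CategoryTheory.Pretriangulated

variable {C : Type u} [Category.{v} C] [HasZeroObject C] [Preadditive C] [HasShift C ℤ]
  [∀ n : ℤ, (CategoryTheory.shiftFunctor C n).Additive] [Pretriangulated C]

lemma Triangle.yoneda_exact₁ (T : Triangle C) (hT : T ∈ distTriang C) {Z : C} (f : T.obj₁ ⟶ Z)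
    (hf : T.mor₃ ≫ f⟦(1 : ℤ)⟧' = 0) : ∃ g : T.obj₂ ⟶ Z, f = T.mor₁ ≫ g := by
  refine Triangle.yoneda_exact₂ _ (inv_rot_of_distTriang _ hT) f ?_
  have hnat := (shiftFunctorCompIsoId C (1 : ℤ) (-1) (add_neg_cancel 1)).hom.naturality f
  dsimp at hnat
  change (-(T.mor₃⟦(-1 : ℤ)⟧') ≫ (shiftFunctorCompIsoId C (1 : ℤ) (-1) (add_neg_cancel 1)).hom.app
    T.obj₁) ≫ f = 0
  rw [Preadditive.neg_comp, Category.assoc, ← hnat, ← Functor.map_comp_assoc, hf,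
    Functor.map_zero, zero_comp, neg_zero]

end CategoryTheory.Pretriangulated

namespace ClusterNote

lemma rigid_of_forall_mem_iff {C : Type u} [Category.{v} C] [Preadditive C] [HasShift C ℤ]
    {X : Set C} (hchar : ∀ M : C, M ∈ X ↔ ∀ Z ∈ X, ∀ f : Z ⟶ M⟦(1 : ℤ)⟧, f = 0) : Rigid X :=
  fun _ hA B hB => (hchar B).1 hB _ hA

section

variable {C : Type u} [Category.{v} C] [HasZeroObject C] [Preadditive C] [HasShift C ℤ]
  [∀ n : ℤ, (shiftFunctor C n).Additive] [Pretriangulated C] {X : Set C}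

lemma Rigid.eq_zero_of_isRightApprox_mor₂ (hX : Rigid X) {T : Triangle C}
    (hT : T ∈ distTriang C) (hg : IsRightApprox X T.mor₂) :
    ∀ Z ∈ X, ∀ f : Z ⟶ T.obj₁⟦(1 : ℤ)⟧, f = 0 := by
  intro Z hZ f
  obtain ⟨ψ, rfl⟩ := Triangle.coyoneda_exact₁ T hT f (hX Z hZ T.obj₂ hg.1 _)
  obtain ⟨h, rfl⟩ := hg.2 Z hZ ψ
  rw [Category.assoc, comp_distTriang_mor_zero₂₃ T hT, comp_zero]

lemma Rigid.isLeftApprox_mor₁ (hX : Rigid X) {T : Triangle C} (hT : T ∈ distTriang C)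
    (h₂ : T.obj₂ ∈ X) (h₃ : T.obj₃ ∈ X) : IsLeftApprox X T.mor₁ := by
  refine ⟨h₂, fun Z hZ f => ?_⟩
  obtain ⟨g, hg⟩ := T.yoneda_exact₁ hT f (hX _ h₃ _ hZ _)
  exact ⟨g, hg.symm⟩

variable (hchar : ∀ M : C, M ∈ X ↔ ∀ Z ∈ X, ∀ f : Z ⟶ M⟦(1 : ℤ)⟧, f = 0)
  (hcf : ContravariantlyFinite X)
include hchar hcf

lemma covariantlyFinite_of_forall_mem_iff : CovariantlyFinite X := by
  intro M
  obtain ⟨X₀, g, hg⟩ := hcf (M⟦(1 : ℤ)⟧)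
  obtain ⟨Y, u, v, hT⟩ := distinguished_cocone_triangle₂ g
  have hrigid := rigid_of_forall_mem_iff hchar
  have hY : Y ∈ X :=
    (hchar Y).2 (hrigid.eq_zero_of_isRightApprox_mor₂ (rot_of_distTriang _ hT) hg)
  exact ⟨Y, u, hrigid.isLeftApprox_mor₁ hT hY hg.1⟩

lemma mem_of_forall_hom_shift_eq_zero (hret : ClosedUnderRetracts X) {M : C}
    (hM : ∀ Z ∈ X, ∀ f : M ⟶ Z⟦(1 : ℤ)⟧, f = 0) : M ∈ X := by
  obtain ⟨X₀, g, hg⟩ := hcf M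
  obtain ⟨N, e, w, hT⟩ := distinguished_cocone_triangle₁ g
  have hN : N ∈ X :=
    (hchar N).2 ((rigid_of_forall_mem_iff hchar).eq_zero_of_isRightApprox_mor₂ hT hg)
  have : Epi g := Triangle.epi₂ _ hT (hM N hN w)
  have := isSplitEpi_of_epi g
  exact hret (section_ g) g (IsSplitEpi.id g) hg.1

end

/-- **Koenig–Zhu, Lemma 3.2.** A contravariantly finite subcategory `X` with
`X = {M : Hom(X, M[1]) = 0}` is cluster tilting. -/
theorem cluster_tilting_of_contravariantly_finite {C : Type u} [Category.{v} C] [Limits.HasZeroObject C] [Preadditive C]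
    [HasShift C ℤ] [∀ n : ℤ, (shiftFunctor C n).Additive] [Pretriangulated C]
    [IsTriangulated C]
    (X : Set C) (hX : GoodSub X) (hcf : ContravariantlyFinite X)
    (hchar : ∀ M : C, M ∈ X ↔ ∀ Z ∈ X, ∀ f : Z ⟶ M⟦(1 : ℤ)⟧, f = 0) :
    ClusterTilting X :=
  ⟨hcf, covariantlyFinite_of_forall_mem_iff hchar hcf, hchar, fun M =>
    ⟨fun hM _ hZ _ => rigid_of_forall_mem_iff hchar M hM _ hZ _,
      mem_of_forall_hom_shift_eq_zero hchar hcf hX.2.1⟩⟩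

end ClusterNote
end

section
/- Let k be a field, C a k-linear, Hom-finite triangulated category with a Serre functor S, and X a rigid cluster tilting subcategory of C. Then S(X) is contained in X[2]: for every object X of X there exists an object X' of X with S(X) ≅ X'[2]. -/
/-!
Take `A' := S(A)[-2]`. As `X` is cluster tilting, `A' ∈ X` as soon as `Hom(Z, A'[1]) = 0` for all
`Z ∈ X`. Now `Hom(Z, S(A)[-1]) ≅ Hom(Z[1], S(A)) ≅ D Hom(A, Z[1])` by the shift adjunction and
Serre duality, and `Hom(A, Z[1]) = 0` by rigidity.
-/

open CategoryTheory CategoryTheory.Limits CategoryTheory.Pretriangulated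

universe v u

namespace ClusterNote

variable {C : Type u} [Category.{v} C]

lemma subsingleton_hom_shift_neg_of_subsingleton [HasShift C ℤ] {Z Y : C} (n : ℤ)
    (h : Subsingleton (Z⟦n⟧ ⟶ Y)) : Subsingleton (Z ⟶ Y⟦-n⟧) :=
  @Equiv.subsingleton _ _ ((shiftEquiv C n).toAdjunction.homEquiv Z Y).symm h

section SerreDuality

variable [Preadditive C] {k : Type*} [Field k] [Linear k C]

lemma SerreFunctor.subsingleton_hom_obj_of_subsingleton (T : SerreFunctor k C) {A B : C}
    (h : Subsingleton (A ⟶ B)) : Subsingleton (B ⟶ T.S.obj A) :=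
  (Module.subsingleton_dual_iff k).mp (@Equiv.subsingleton _ _ (T.serre A B).toEquiv.symm h)

lemma Rigid.subsingleton_hom_shift_neg_one_serre [HasShift C ℤ] {X : Set C} (hrig : Rigid X)
    (T : SerreFunctor k C) {A Z : C} (hA : A ∈ X) (hZ : Z ∈ X) :
    Subsingleton (Z ⟶ (T.S.obj A)⟦(-1 : ℤ)⟧) :=
  subsingleton_hom_shift_neg_of_subsingleton 1 <| T.subsingleton_hom_obj_of_subsingleton
    ⟨fun f g => (hrig A hA Z hZ f).trans (hrig A hA Z hZ g).symm⟩

end SerreDuality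

/-- If `X` is a rigid cluster tilting subcategory of a triangulated category with Serre
functor `S`, then `S(X) ⊆ X[2]`. -/
theorem serre_sub_shift_two_of_cluster_tilting {C : Type u} [Category.{v} C] [Limits.HasZeroObject C] [Preadditive C]
    [HasShift C ℤ] [∀ n : ℤ, (shiftFunctor C n).Additive] [Pretriangulated C]
    [IsTriangulated C]
    {k : Type*} [Field k] [Linear k C] [∀ A B : C, FiniteDimensional k (A ⟶ B)]
    (T : SerreFunctor k C) (X : Set C) (hX : GoodSub X)
    (hrig : Rigid X) (hct : ClusterTilting X) :
    ∀ A ∈ X, ∃ A' ∈ X, Nonempty (T.S.obj A ≅ A'⟦(2 : ℤ)⟧) := by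
  intro A hA
  refine ⟨(T.S.obj A)⟦(-2 : ℤ)⟧, (hct.2.2.1 _).mpr fun Z hZ f => ?_,
    ⟨(shiftFunctorCompIsoId C (-2 : ℤ) 2 (by norm_num)).symm.app _⟩⟩
  have := hrig.subsingleton_hom_shift_neg_one_serre T hA hZ
  exact ((Iso.refl Z).homCongr ((shiftFunctorAdd' C (-2 : ℤ) 1 (-1) (by norm_num)).app
    (T.S.obj A))).symm.subsingleton.elim f 0

end ClusterNote
end

section
/- Let k be a field, C a k-linear, Hom-finite triangulated category with a Serre functor S, and X a rigid cluster tilting subcategory of C. Then X[2] is contained in S(X): for every object X of X there exists an object X'' of X with X[2] ≅ S(X''). Equivalently, every object M of C with S(M) ≅ X[2] for some X in X lies in X. -/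
open CategoryTheory CategoryTheory.Limits CategoryTheory.Pretriangulated

universe v u

namespace ClusterNote

variable {C : Type u} [Category.{v} C]

namespace SerreFunctor

variable {k : Type*} [Field k] [Preadditive C] [Linear k C]

theorem subsingleton_hom_of_subsingleton_hom_obj (T : SerreFunctor k C) {A B : C}
    [Subsingleton (B ⟶ T.S.obj A)] : Subsingleton (A ⟶ B) :=
  (T.serre A B).toEquiv.subsingleton

end SerreFunctor

section Shift

variable [HasShift C ℤ]

theorem subsingleton_shift_hom_shift {Z A : C} (a b c : ℤ) (h : a + b = c)
    [Subsingleton (Z ⟶ A⟦a⟧)] : Subsingleton (Z⟦b⟧ ⟶ A⟦c⟧) :=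
  have : Subsingleton (Z⟦b⟧ ⟶ A⟦a⟧⟦b⟧) :=
    (Functor.FullyFaithful.ofFullyFaithful (shiftFunctor C b)).homEquiv.symm.subsingleton
  (Iso.homCongr (Iso.refl _) ((shiftFunctorAdd' C a b c h).app A)).subsingleton
    (β := Z⟦b⟧ ⟶ A⟦a⟧⟦b⟧)

variable [Preadditive C]

theorem Rigid.subsingleton_hom {X : Set C} (hrig : Rigid X) {Z A : C} (hZ : Z ∈ X)
    (hA : A ∈ X) : Subsingleton (Z ⟶ A⟦(1 : ℤ)⟧) :=
  ⟨fun f g => (hrig Z hZ A hA f).trans (hrig Z hZ A hA g).symm⟩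

/-- Serre duality turns `Hom(M, Z[1])` into the dual of `Hom(Z[1], A[2]) ≅ Hom(Z, A[1]) = 0`. -/
theorem mem_of_serre_obj_iso_shift_two {k : Type*} [Field k] [Linear k C]
    (T : SerreFunctor k C) {X : Set C} (hrig : Rigid X) (hct : ClusterTilting X) {M A : C}
    (hA : A ∈ X) (e : T.S.obj M ≅ A⟦(2 : ℤ)⟧) : M ∈ X := by
  refine (hct.2.2.2 M).mpr fun Z hZ f => ?_
  have := hrig.subsingleton_hom hZ hA
  have : Subsingleton (Z⟦(1 : ℤ)⟧ ⟶ A⟦(2 : ℤ)⟧) := subsingleton_shift_hom_shift 1 1 2 rfl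
  have : Subsingleton (Z⟦(1 : ℤ)⟧ ⟶ T.S.obj M) := (Iso.homCongr (Iso.refl _) e).subsingleton
  have := T.subsingleton_hom_of_subsingleton_hom_obj (A := M) (B := Z⟦(1 : ℤ)⟧)
  exact Subsingleton.elim f 0

end Shift

/-- If `X` is a rigid cluster tilting subcategory of a triangulated category with Serre
functor `S`, then `X[2] ⊆ S(X)`; equivalently, any `M` with `S(M) ≅ X[2]` for some
`X ∈ X` lies in `X`. -/
theorem shift_two_sub_serre_of_cluster_tilting {C : Type u} [Category.{v} C] [Limits.HasZeroObject C] [Preadditive C]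
    [HasShift C ℤ] [∀ n : ℤ, (shiftFunctor C n).Additive] [Pretriangulated C]
    [IsTriangulated C]
    {k : Type*} [Field k] [Linear k C] [∀ A B : C, FiniteDimensional k (A ⟶ B)]
    (T : SerreFunctor k C) (X : Set C) (hX : GoodSub X)
    (hrig : Rigid X) (hct : ClusterTilting X) :
    (∀ A ∈ X, ∃ A'' ∈ X, Nonempty (A⟦(2 : ℤ)⟧ ≅ T.S.obj A'')) ∧
    (∀ M : C, (∃ A ∈ X, Nonempty (T.S.obj M ≅ A⟦(2 : ℤ)⟧)) → M ∈ X) := by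
  have hmem : ∀ M : C, (∃ A ∈ X, Nonempty (T.S.obj M ≅ A⟦(2 : ℤ)⟧)) → M ∈ X :=
    fun _ ⟨_, hA, ⟨e⟩⟩ => mem_of_serre_obj_iso_shift_two T hrig hct hA e
  refine ⟨fun A hA => ?_, hmem⟩
  have := T.isEquivalence
  exact ⟨_, hmem _ ⟨A, hA, ⟨T.S.objObjPreimageIso _⟩⟩, ⟨(T.S.objObjPreimageIso _).symm⟩⟩

end ClusterNote
end

section
/- Let C be a triangulated category, X a subcategory of C, and A →f B →g M →h A[1] a distinguished triangle in C such that M is not isomorphic to any object of X and g is right almost split (every morphism Y → M that is not a split epimorphism factors through g). If g factors through an object of X, then the image of f in C/X is a split epimorphism: there exists m : B → A such that 𝟙_B − m ≫ f factors through an object of X. -/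
open CategoryTheory CategoryTheory.Limits CategoryTheory.Pretriangulated

universe v u

namespace ClusterNote

variable {C : Type u} [Category.{v} C]

theorem mem_of_isSplitEpi {X : Set C} (hX : ClosedUnderRetracts X) {Z M : C} (hZ : Z ∈ X)
    (b : Z ⟶ M) [IsSplitEpi b] : M ∈ X :=
  hX (section_ b) b (IsSplitEpi.id b) hZ

theorem exists_id_sub_eq_comp_of_comp_eq [HasZeroObject C] [Preadditive C] [HasShift C ℤ]
    [∀ n : ℤ, (shiftFunctor C n).Additive] [Pretriangulated C]
    {A B M : C} {f : A ⟶ B} {g : B ⟶ M} {h : M ⟶ A⟦(1 : ℤ)⟧}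
    (htri : Triangle.mk f g h ∈ distTriang C) {e : B ⟶ B} (he : e ≫ g = g) :
    ∃ m : B ⟶ A, 𝟙 B - e = m ≫ f :=
  Triangle.coyoneda_exact₂ _ htri (𝟙 B - e) (show (𝟙 B - e) ≫ g = 0 by
    rw [Preadditive.sub_comp, Category.id_comp, he, sub_self])

/-- If `A ⟶ B ⟶ M ⟶ A[1]` is a distinguished triangle with `g` right almost split and
`M` not isomorphic to any object of `X`, and `g` factors through `X`, then the image of
`f` in `C/X` is a split epimorphism. -/
theorem split_epi_in_quotient_of_factors {C : Type u} [Category.{v} C] [Limits.HasZeroObject C] [Preadditive C]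
    [HasShift C ℤ] [∀ n : ℤ, (shiftFunctor C n).Additive] [Pretriangulated C]
    [IsTriangulated C]
    (X : Set C) (hX : GoodSub X)
    {A B M : C} (f : A ⟶ B) (g : B ⟶ M) (h : M ⟶ A⟦(1 : ℤ)⟧)
    (htri : Triangle.mk f g h ∈ distTriang C)
    (hM : ∀ Z ∈ X, IsEmpty (M ≅ Z))
    (hras : ∀ ⦃Y : C⦄ (y : Y ⟶ M), ¬ IsSplitEpi y → ∃ y' : Y ⟶ B, y' ≫ g = y)
    (hg : FactorsThru X g) :
    ∃ m : B ⟶ A, FactorsThru X (𝟙 B - m ≫ f) := by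
  obtain ⟨Z, hZ, a, b, rfl⟩ := hg
  have hb : ¬ IsSplitEpi b := fun _ =>
    (hM M (mem_of_isSplitEpi hX.2.1 hZ b)).false (Iso.refl M)
  obtain ⟨b', hb'⟩ := hras b hb
  obtain ⟨m, hm⟩ := exists_id_sub_eq_comp_of_comp_eq htri (e := a ≫ b')
    (by rw [Category.assoc, hb'])
  exact ⟨m, Z, hZ, a, b', by rw [← hm, sub_sub_cancel]⟩

end ClusterNote
end
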